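/- For every positive integer n, the Zimin type ZFib[n] of the prefix of length n of the infinite Fibonacci word equals ψ(n), where ψ(n) is the unique k ≥ 1 such that the Fibonacci representation w of n factors as w = 1·x_1⋯x_{k-1}·z with each x_i ∈ {00, 001, 01} and z empty or equal to 0. -/

import Mathlib

open List Filter

/-- The Zimin pattern `Z_k` as a word over variables `0, 1, ..., k-1`
(`Z_0` is empty, `Z_{k+1} = Z_k · x_{k+1} · Z_k`). -/
def ziminWord : ℕ → List ℕ
  | 0 => []
  | k + 1 => ziminWord k ++ k :: ziminWord k

/-- `w` is the image of the Zimin pattern `Z_k` under a non-erasing morphism. -/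
def IsZiminImage {α : Type*} (k : ℕ) (w : List α) : Prop :=
  ∃ h : ℕ → List α, (∀ i, h i ≠ []) ∧ w = (ziminWord k).flatMap h

/-- The Zimin type of `w`: the maximum `k` such that `w` is an image of `Z_k`
under a non-erasing morphism (0 for the empty word). -/
noncomputable def ziminType {α : Type*} (w : List α) : ℕ :=
  sSup {k | IsZiminImage k w}

/-- The Zimin pattern `Z_k` embeds in `w`: some factor of `w` is an image of `Z_k`. -/
def ziminEmbeds {α : Type*} (k : ℕ) (w : List α) : Prop :=
  ∃ u : List α, u <:+: w ∧ IsZiminImage k u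

/-- Length of the longest border (proper prefix that is also a proper suffix) of `w`. -/
noncomputable def bordLen {α : Type*} (w : List α) : ℕ :=
  sSup {j | w.take j <:+ w ∧ j < w.length}

/-- Length of the longest short border (border of length `< |w|/2`) of `w`. -/
noncomputable def shortBordLen {α : Type*} (w : List α) : ℕ :=
  sSup {j | w.take j <:+ w ∧ 2 * j < w.length}

/-- The longest border of `w`. -/
noncomputable def bord {α : Type*} (w : List α) : List α := w.take (bordLen w)

/-- The longest short border of `w`. -/
noncomputable def shortBord {α : Type*} (w : List α) : List α := w.take (shortBordLen w)

/-- The Fibonacci words over `Bool` (`a = false`, `b = true`), with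
`fibWord 0 = F_0 = a`, `fibWord 1 = F_1 = F_0 F_{-1} = ab`, `F_{n} = F_{n-1} F_{n-2}`. -/
def fibWord : ℕ → List Bool
  | 0 => [false]
  | 1 => [false, true]
  | n + 2 => fibWord (n + 1) ++ fibWord n

/-- The Fibonacci numbers `Φ_n = |F_n|` (`Φ_0 = 1, Φ_1 = 2, Φ_2 = 3, ...`). -/
def Phi (n : ℕ) : ℕ := (fibWord n).length

/-- The infinite Fibonacci word `F_∞` (0-indexed letters). -/
def fibInf (i : ℕ) : Bool := (fibWord (i + 2)).getD i false

/-- The prefix `F_∞[1..n]` of the infinite Fibonacci word. -/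
def fibPrefix (n : ℕ) : List Bool := (List.range n).map fibInf


/-- The value `(w)_Fib` of a binary word in the Fibonacci numeration system
(most significant digit first; the last digit has weight `Φ_0`). -/
def fibVal : List Bool → ℕ
  | [] => 0
  | d :: rest => (if d then Phi rest.length else 0) + fibVal rest

/-- `w` is the Fibonacci representation of `n`: it starts with `1`, has no two
adjacent `1`s, and `(w)_Fib = n`. -/
def IsFibRep (n : ℕ) (w : List Bool) : Prop :=
  w.head? = some true ∧ w.Chain' (fun a b => ¬(a = true ∧ b = true)) ∧ fibVal w = n

/-!
An image of `Z_{k+1}` is a word `u t u` with `t ≠ []` and `u` an image of `Z_k`, i.e. a word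
with a short border that is an image of `Z_k`. A word having an image of `Z_{k+1}` as a border is
itself one, so the longest short border is the best one to recurse on:
`ziminType w = ziminType (shortBord w) + 1`.

For a prefix of the Fibonacci word of length `n`, short borders of length `b` are the periods
`n - b > n / 2`. If the Fibonacci representation of `n` is `1 x r` with `x ∈ {00, 001, 01}`, then
`n = Φ_{M+1} + (1 r)_Fib` where `Φ_{M+1}` is a period of that prefix while no `p` with
`Φ_M < p < Φ_{M+1}` is one, so the longest short border is the prefix of length `(1 r)_Fib`.
Removing one block `x_i` at a time reaches `1` or `10`, whose prefixes have Zimin type `1`.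
-/
section Zimin

variable {α : Type*} {k : ℕ} {u w : List α}

lemma lt_of_mem_ziminWord {i : ℕ} (h : i ∈ ziminWord k) : i < k := by
  induction k with
  | zero => simp [ziminWord] at h
  | succ k ih =>
    simp only [ziminWord, List.mem_append, List.mem_cons] at h
    rcases h with h | rfl | h <;> grind

lemma isZiminImage_nil [Nonempty α] : IsZiminImage 0 ([] : List α) :=
  ⟨fun _ => [Classical.arbitrary α], by simp, rfl⟩

lemma isZiminImage_one (hw : w ≠ []) : IsZiminImage 1 w :=
  ⟨fun _ => w, fun _ => hw, by simp [ziminWord]⟩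

lemma isZiminImage_succ_iff :
    IsZiminImage (k + 1) w ↔ ∃ u t, IsZiminImage k u ∧ t ≠ [] ∧ w = u ++ t ++ u := by
  constructor
  · rintro ⟨h, hh, rfl⟩
    exact ⟨_, h k, ⟨h, hh, rfl⟩, hh k, by simp [ziminWord]⟩
  · rintro ⟨u, t, ⟨h, hh, rfl⟩, ht, rfl⟩
    have hk : ∀ i ∈ ziminWord k, Function.update h k t i = h i := fun i hi =>
      Function.update_of_ne (lt_of_mem_ziminWord hi).ne _ _
    refine ⟨Function.update h k t, fun i => ?_, ?_⟩
    · rcases eq_or_ne i k with rfl | hi <;> simp [*]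
    · simp [ziminWord, List.flatMap_congr hk]

lemma IsZiminImage.length_le (h : IsZiminImage k w) : k ≤ w.length := by
  induction k generalizing w with
  | zero => omega
  | succ k ih =>
    obtain ⟨u, t, hu, ht, rfl⟩ := isZiminImage_succ_iff.mp h
    have := List.length_pos_iff.mpr ht
    simp only [List.length_append]
    grind

lemma exists_eq_append_append_of_border (hp : u <+: w) (hs : u <:+ w)
    (h : 2 * u.length < w.length) : ∃ t ≠ [], w = u ++ t ++ u := by
  obtain ⟨a, rfl⟩ := hs
  simp only [List.length_append] at h
  obtain ⟨t, rfl⟩ := List.prefix_of_prefix_length_le hp (List.prefix_append a u) (by omega)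
  refine ⟨t, ?_, by simp⟩
  rintro rfl
  simp only [List.append_nil] at h
  omega

lemma IsZiminImage.of_border (h : IsZiminImage (k + 1) u) (hp : u <+: w) (hs : u <:+ w) :
    IsZiminImage (k + 1) w := by
  obtain ⟨s, t, hs', ht, rfl⟩ := isZiminImage_succ_iff.mp h
  have hlen : 2 * s.length < (s ++ t ++ s).length := by
    have := List.length_pos_iff.mpr ht
    simp only [List.length_append]
    omega
  obtain ⟨t', ht', rfl⟩ := exists_eq_append_append_of_border
    (((List.prefix_append s t).trans (List.prefix_append _ s)).trans hp)
    ((List.suffix_append (s ++ t) s).trans hs) (hlen.trans_le hp.length_le)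
  exact isZiminImage_succ_iff.mpr ⟨s, t', hs', ht', rfl⟩

lemma bddAbove_setOf_isZiminImage (w : List α) : BddAbove {k | IsZiminImage k w} :=
  ⟨w.length, fun _ hk => hk.length_le⟩

lemma le_ziminType (h : IsZiminImage k w) : k ≤ ziminType w :=
  le_csSup (bddAbove_setOf_isZiminImage w) h

lemma isZiminImage_ziminType [Nonempty α] (w : List α) : IsZiminImage (ziminType w) w := by
  refine Nat.sSup_mem ?_ (bddAbove_setOf_isZiminImage w)
  rcases eq_or_ne w [] with rfl | hw
  · exact ⟨0, isZiminImage_nil⟩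
  · exact ⟨1, isZiminImage_one hw⟩

lemma ziminType_nil : ziminType ([] : List α) = 0 :=
  Nat.le_zero.mp (csSup_le' fun _ hk => hk.length_le)

lemma ziminType_le_of_border (hp : u <+: w) (hs : u <:+ w) : ziminType u ≤ ziminType w := by
  rcases eq_or_ne u [] with rfl | hu
  · simp [ziminType_nil]
  have : Nonempty α := ⟨u.head hu⟩
  obtain ⟨k, hk⟩ := Nat.exists_eq_add_one.mpr (le_ziminType (isZiminImage_one hu))
  have h := isZiminImage_ziminType u
  rw [hk] at h ⊢
  exact le_ziminType (h.of_border hp hs)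

lemma shortBordLen_spec (hw : w ≠ []) :
    w.take (shortBordLen w) <:+ w ∧ 2 * shortBordLen w < w.length :=
  Nat.sSup_mem (s := {j | w.take j <:+ w ∧ 2 * j < w.length})
    ⟨0, by simpa using List.length_pos_iff.mpr hw⟩ ⟨w.length, fun _ hj => by grind⟩

lemma le_shortBordLen {j : ℕ} (hs : w.take j <:+ w) (hj : 2 * j < w.length) :
    j ≤ shortBordLen w :=
  le_csSup ⟨w.length, fun _ hj => by grind⟩ ⟨hs, hj⟩

lemma length_shortBord (hw : w ≠ []) : (shortBord w).length = shortBordLen w := by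
  have := (shortBordLen_spec hw).2
  simp only [shortBord, List.length_take]
  omega

lemma ziminType_eq_ziminType_shortBord_add_one (hw : w ≠ []) :
    ziminType w = ziminType (shortBord w) + 1 := by
  have : Nonempty α := ⟨w.head hw⟩
  obtain ⟨hsuf, hshort⟩ := shortBordLen_spec hw
  have hpre : shortBord w <+: w := List.take_prefix _ _
  rw [← length_shortBord hw] at hshort
  apply le_antisymm
  · refine csSup_le ⟨1, isZiminImage_one hw⟩ fun k hk => ?_
    obtain _ | k := k
    · omega
    obtain ⟨u, t, hu, ht, rfl⟩ := isZiminImage_succ_iff.mp hk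
    have hupre : u <+: u ++ t ++ u := List.prefix_append_of_prefix (List.prefix_append u t)
    have husuf : u <:+ u ++ t ++ u := List.suffix_append _ _
    have hlen : u.length ≤ (shortBord (u ++ t ++ u)).length := by
      rw [length_shortBord hw]
      refine le_shortBordLen ?_ ?_
      · rwa [← List.prefix_iff_eq_take.mp hupre]
      · have := List.length_pos_iff.mpr ht
        simp only [List.length_append]
        omega
    have := ziminType_le_of_border (List.prefix_of_prefix_length_le hupre hpre hlen)
      (List.suffix_of_suffix_length_le husuf hsuf hlen)
    have := le_ziminType hu
    omega
  · obtain ⟨t, ht, heq⟩ := exists_eq_append_append_of_border hpre hsuf hshort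
    exact le_ziminType
      (isZiminImage_succ_iff.mpr ⟨_, t, isZiminImage_ziminType _, ht, heq⟩)

lemma ziminType_eq_one_of_length_le_two (hw : w ≠ []) (h : w.length ≤ 2) : ziminType w = 1 := by
  have := (shortBordLen_spec hw).2
  rw [ziminType_eq_ziminType_shortBord_add_one hw, shortBord,
    show shortBordLen w = 0 by omega, List.take_zero, ziminType_nil]

end Zimin

section FibonacciWord

lemma fibWord_ne_nil : ∀ n, fibWord n ≠ []
  | 0 | 1 => by simp [fibWord]
  | n + 2 => by simp [fibWord, fibWord_ne_nil (n + 1)]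

lemma Phi_zero : Phi 0 = 1 := rfl

lemma Phi_one : Phi 1 = 2 := rfl

lemma Phi_add_two (n : ℕ) : Phi (n + 2) = Phi (n + 1) + Phi n := by
  simp [Phi, fibWord]

lemma Phi_pos (n : ℕ) : 0 < Phi n :=
  List.length_pos_iff.mpr (fibWord_ne_nil n)

lemma Phi_strictMono : StrictMono Phi := by
  refine strictMono_nat_of_lt_succ fun n => ?_
  cases n with
  | zero => simp [Phi_zero, Phi_one]
  | succ n => have := Phi_pos n; rw [Phi_add_two]; omega

lemma Phi_le_Phi {m n : ℕ} (h : m ≤ n) : Phi m ≤ Phi n := Phi_strictMono.monotone h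

lemma Phi_lt_Phi {m n : ℕ} (h : m < n) : Phi m < Phi n := Phi_strictMono h

lemma two_le_Phi_succ (n : ℕ) : 2 ≤ Phi (n + 1) :=
  Phi_one ▸ Phi_le_Phi (Nat.le_add_left 1 n)

lemma fibWord_prefix_fibWord_succ : ∀ n, fibWord n <+: fibWord (n + 1)
  | 0 => ⟨[true], rfl⟩
  | _ + 1 => List.prefix_append _ _

lemma fibWord_prefix_fibWord {m n : ℕ} (h : m ≤ n) : fibWord m <+: fibWord n := by
  induction n, h using Nat.le_induction with
  | base => exact List.prefix_rfl
  | succ n _ ih => exact ih.trans (fibWord_prefix_fibWord_succ n)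

lemma fibInf_eq_getElem {m i : ℕ} (h : i < Phi m) : fibInf i = (fibWord m)[i]'h := by
  have hi : i < Phi (i + 2) := by
    have : i + 2 ≤ Phi (i + 2) := Phi_strictMono.id_le _
    omega
  rw [fibInf, List.getD_eq_getElem _ _ hi]
  rcases le_total m (i + 2) with hm | hm
  · exact ((fibWord_prefix_fibWord hm).getElem h).symm
  · exact (fibWord_prefix_fibWord hm).getElem hi

lemma take_fibWord_append_fibWord_comm : ∀ n,
    (fibWord n ++ fibWord (n + 1)).take (Phi (n + 2) - 2)
      = (fibWord (n + 1) ++ fibWord n).take (Phi (n + 2) - 2)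
  | 0 | 1 => by decide
  | n + 2 => by
    have hlen : Phi (n + 4) - 2 = (fibWord (n + 2)).length + (Phi (n + 3) - 2) := by
      have h4 : Phi (n + 4) = Phi (n + 3) + Phi (n + 2) := Phi_add_two (n + 2)
      have h3 : Phi (n + 3) = Phi (n + 2) + Phi (n + 1) := Phi_add_two (n + 1)
      have := Phi_pos (n + 1)
      have := Phi_pos (n + 2)
      change _ = Phi (n + 2) + _
      omega
    have hw : fibWord (n + 3) = fibWord (n + 2) ++ fibWord (n + 1) := rfl
    calc (fibWord (n + 2) ++ fibWord (n + 3)).take (Phi (n + 4) - 2)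
        = fibWord (n + 2) ++ (fibWord (n + 2) ++ fibWord (n + 1)).take (Phi (n + 3) - 2) := by
          rw [hlen, hw, List.take_length_add_append]
      _ = fibWord (n + 2) ++ (fibWord (n + 1) ++ fibWord (n + 2)).take (Phi (n + 3) - 2) := by
          rw [take_fibWord_append_fibWord_comm (n + 1)]
      _ = (fibWord (n + 3) ++ fibWord (n + 2)).take (Phi (n + 4) - 2) := by
          rw [hlen, hw, List.append_assoc, List.take_length_add_append]

lemma getElem?_fibWord {m i : ℕ} (h : i < Phi m) : (fibWord m)[i]? = some (fibInf i) := by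
  rw [fibInf_eq_getElem h]
  exact List.getElem?_eq_getElem (l := fibWord m) h

lemma fibInf_Phi_add {j i : ℕ} (h : i + 3 ≤ Phi (j + 1)) : fibInf (Phi j + i) = fibInf i := by
  have hj : Phi (j + 2) = Phi (j + 1) + Phi j := Phi_add_two j
  have hcomm := congrArg (·[Phi j + i]?) (take_fibWord_append_fibWord_comm j)
  simp only [List.getElem?_take_of_lt (show Phi j + i < Phi (j + 2) - 2 by omega)] at hcomm
  rw [List.getElem?_append_right (show (fibWord j).length ≤ Phi j + i from Nat.le_add_right _ _),
    show Phi j + i - (fibWord j).length = i from Nat.add_sub_cancel_left _ _,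
    getElem?_fibWord (show i < Phi (j + 1) by omega),
    show fibWord (j + 1) ++ fibWord j = fibWord (j + 2) from rfl,
    getElem?_fibWord (show Phi j + i < Phi (j + 2) by omega)] at hcomm
  exact (Option.some.inj hcomm).symm

lemma fibInf_Phi_sub_two_ne : ∀ t, fibInf (Phi (t + 2) - 2) ≠ fibInf (Phi (t + 1) - 2)
  | 0 => by decide
  | t + 1 => by
    have hsum : Phi (t + 1 + 2) = Phi (t + 2) + Phi (t + 1) := Phi_add_two (t + 1)
    have hlt : Phi (t + 1) < Phi (t + 2 + 1) := Phi_lt_Phi (by omega)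
    have := two_le_Phi_succ t
    rw [show Phi (t + 1 + 2) - 2 = Phi (t + 2) + (Phi (t + 1) - 2) by omega,
      fibInf_Phi_add (by omega)]
    exact (fibInf_Phi_sub_two_ne t).symm

lemma exists_Phi_le_lt {q : ℕ} (hq : 1 ≤ q) : ∃ j, Phi j ≤ q ∧ q < Phi (j + 1) := by
  induction q, hq using Nat.le_induction with
  | base => exact ⟨0, le_rfl, by simp [Phi_one]⟩
  | succ q _ ih =>
    obtain ⟨j, hj, hqj⟩ := ih
    rcases (Nat.succ_le_of_lt hqj).lt_or_eq with h | h
    · exact ⟨j, by omega, h⟩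
    · exact ⟨j + 1, h.ge, h.trans_lt (Phi_lt_Phi (by omega))⟩

/-- The mismatch is at `Φ_{j+1} - 2` for the least Zeckendorf summand `Φ_j` of `p - Φ_m`. -/
lemma exists_fibInf_add_ne {m p : ℕ} (hmp : Phi m < p) (hpm : p < Phi (m + 1)) :
    ∃ i, p + i + 2 ≤ 2 * Phi m ∧ fibInf (p + i) ≠ fibInf i := by
  induction m using Nat.strong_induction_on generalizing p with
  | _ m ih =>
  obtain _ | m := m
  · simp only [Phi_zero, zero_add, Phi_one] at hmp hpm
    omega
  have hm : Phi (m + 1 + 1) = Phi (m + 1) + Phi m := Phi_add_two m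
  obtain ⟨j, hjq, hqj⟩ := exists_Phi_le_lt (q := p - Phi (m + 1)) (by omega)
  have hjm : j < m := Phi_strictMono.lt_iff_lt.mp (by omega)
  have hj : Phi (j + 2) = Phi (j + 1) + Phi j := Phi_add_two j
  have hjj : Phi j ≤ Phi (j + 1) := Phi_le_Phi (by omega)
  have hjm' : Phi (j + 2) ≤ Phi (m + 1) := Phi_le_Phi (by omega)
  rcases hjq.lt_or_eq with hlt | heq
  · obtain ⟨i, hi, hne⟩ := ih j (by omega) hlt hqj
    refine ⟨i, by omega, ?_⟩
    rwa [show p + i = Phi (m + 1) + (p - Phi (m + 1) + i) by omega, fibInf_Phi_add (by omega)]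
  · have := two_le_Phi_succ j
    refine ⟨Phi (j + 1) - 2, by omega, ?_⟩
    rw [show p + (Phi (j + 1) - 2) = Phi (m + 1) + (Phi (j + 2) - 2) by omega,
      fibInf_Phi_add (by omega)]
    exact fibInf_Phi_sub_two_ne j

end FibonacciWord

section Borders

lemma map_range_suffix_map_range_add_iff {α : Type*} {f : ℕ → α} {a b : ℕ} :
    (List.range b).map f <:+ (List.range (a + b)).map f ↔ ∀ i < b, f (a + i) = f i := by
  rw [List.range_add, List.map_append, List.map_map, List.suffix_iff_eq_drop]
  simp [List.map_inj_left, eq_comm]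

lemma length_fibPrefix (n : ℕ) : (fibPrefix n).length = n := by
  simp [fibPrefix]

lemma fibPrefix_ne_nil {n : ℕ} (hn : n ≠ 0) : fibPrefix n ≠ [] := by
  simpa [fibPrefix] using hn

lemma take_fibPrefix {b n : ℕ} (h : b ≤ n) : (fibPrefix n).take b = fibPrefix b := by
  simp [fibPrefix, ← List.map_take, Nat.min_eq_left h]

lemma take_fibPrefix_suffix_iff {a b : ℕ} :
    (fibPrefix (a + b)).take b <:+ fibPrefix (a + b) ↔ ∀ i < b, fibInf (a + i) = fibInf i := by
  rw [take_fibPrefix (Nat.le_add_left b a)]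
  exact map_range_suffix_map_range_add_iff

lemma shortBordLen_fibPrefix_Phi_add {M m : ℕ} (hm : m < Phi (M + 1))
    (hM : 2 * Phi M ≤ Phi (M + 1) + m) : shortBordLen (fibPrefix (Phi (M + 1) + m)) = m := by
  have hM2 : Phi (M + 1 + 1) = Phi (M + 1) + Phi M := Phi_add_two M
  have := Phi_pos M
  refine IsGreatest.csSup_eq ⟨⟨?_, ?_⟩, fun b ⟨hb, hb2⟩ => ?_⟩
  · exact take_fibPrefix_suffix_iff.mpr fun i hi => fibInf_Phi_add (by omega)
  · rw [length_fibPrefix]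
    omega
  · rw [length_fibPrefix] at hb2
    by_contra! hbm
    obtain ⟨p, hp⟩ : ∃ p, Phi (M + 1) + m = p + b := ⟨_, (Nat.sub_add_cancel (by omega)).symm⟩
    rw [hp, take_fibPrefix_suffix_iff] at hb
    obtain ⟨i, hi, hne⟩ := exists_fibInf_add_ne (m := M) (p := p) (by omega) (by omega)
    exact hne (hb i (by omega))

end Borders

section Representation

abbrev NoAdjacentOnes (t : List Bool) : Prop := t.IsChain fun a b => ¬(a = true ∧ b = true)

def IsPsiBlock (x : List Bool) : Prop :=
  x = [false, false] ∨ x = [false, false, true] ∨ x = [false, true]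

@[simp]
lemma fibVal_cons_true (r : List Bool) : fibVal (true :: r) = Phi r.length + fibVal r := by
  simp [fibVal]

@[simp]
lemma fibVal_cons_false (r : List Bool) : fibVal (false :: r) = fibVal r := by
  simp [fibVal]

lemma fibVal_lt : ∀ {t : List Bool}, NoAdjacentOnes t → fibVal t < Phi t.length
  | [], _ => by simp [fibVal, Phi_zero]
  | [true], _ => by simp [fibVal, Phi_zero, Phi_one]
  | false :: r, h => by
    simpa using (fibVal_lt h.tail).trans_le (Phi_le_Phi (Nat.le_succ _))
  | true :: true :: _, h => by simp at h
  | true :: false :: r, h => by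
    have := fibVal_lt (t := r) h.tail.tail
    have : Phi (r.length + 1 + 1) = Phi (r.length + 1) + Phi r.length := Phi_add_two _
    simp only [fibVal_cons_true, fibVal_cons_false, List.length_cons]
    omega

lemma fibVal_lt_Phi_pred {t : List Bool} (h : NoAdjacentOnes t) (ht : t.head? ≠ some true) :
    fibVal t < Phi (t.length - 1) := by
  match t, ht with
  | [], _ => simp [fibVal, Phi_zero]
  | false :: r, _ => simpa using fibVal_lt h.tail

lemma exists_fibVal_true_cons_psiBlock {x rest : List Bool} (hx : IsPsiBlock x)
    (hrest : NoAdjacentOnes rest) (hhead : rest.head? ≠ some true) :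
    ∃ M, fibVal (true :: (x ++ rest)) = Phi (M + 1) + fibVal (true :: rest) ∧
      fibVal (true :: rest) < Phi (M + 1) ∧ 2 * Phi M ≤ Phi (M + 1) + fibVal (true :: rest) := by
  have hq := fibVal_lt hrest
  have hq' := fibVal_lt_Phi_pred hrest hhead
  obtain ⟨L, hL⟩ : ∃ L, rest.length = L := ⟨_, rfl⟩
  rw [hL] at hq hq'
  have h2 : Phi (L + 2) = Phi (L + 1) + Phi L := Phi_add_two L
  have h3 : Phi (L + 3) = Phi (L + 2) + Phi (L + 1) := Phi_add_two (L + 1)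
  have h1 : Phi (L + 1) = Phi L + Phi (L - 1) := by
    cases L with
    | zero => rfl
    | succ L => exact Phi_add_two L
  have hmono : Phi L ≤ Phi (L + 1) := Phi_le_Phi (Nat.le_succ L)
  have hmono' : Phi (L - 1) ≤ Phi L := Phi_le_Phi (Nat.sub_le L 1)
  rcases hx with rfl | rfl | rfl
  · exact ⟨L, by simp [hL, Nat.add_assoc]; omega⟩
  · exact ⟨L + 2, by simp [hL, Nat.add_assoc]; omega⟩
  · exact ⟨L + 1, by simp [hL, Nat.add_assoc]; omega⟩

lemma shortBord_fibPrefix_fibVal_psiBlock {x rest : List Bool} (hx : IsPsiBlock x)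
    (hrest : NoAdjacentOnes rest) (hhead : rest.head? ≠ some true) :
    shortBord (fibPrefix (fibVal (true :: (x ++ rest)))) = fibPrefix (fibVal (true :: rest)) := by
  obtain ⟨M, hval, hlt, hM⟩ := exists_fibVal_true_cons_psiBlock hx hrest hhead
  rw [hval, shortBord, shortBordLen_fibPrefix_Phi_add hlt hM, take_fibPrefix (by omega)]

lemma head?_flatten_append_ne_true {parts : List (List Bool)} {z : List Bool}
    (hparts : ∀ p ∈ parts, IsPsiBlock p) (hz : z = [] ∨ z = [false]) :
    (parts.flatten ++ z).head? ≠ some true := by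
  match parts, hparts with
  | [], _ => rcases hz with rfl | rfl <;> simp
  | p :: _, hparts => rcases hparts p List.mem_cons_self with rfl | rfl | rfl <;> simp

lemma ziminType_fibPrefix_fibVal {parts : List (List Bool)} {z : List Bool}
    (hparts : ∀ p ∈ parts, IsPsiBlock p) (hz : z = [] ∨ z = [false])
    (hchain : NoAdjacentOnes (true :: (parts.flatten ++ z))) :
    ziminType (fibPrefix (fibVal (true :: (parts.flatten ++ z)))) = parts.length + 1 := by
  induction parts with
  | nil =>
    rcases hz with rfl | rfl <;>
      exact ziminType_eq_one_of_length_le_two (by decide) (by decide)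
  | cons x parts ih =>
    have hparts' : ∀ p ∈ parts, IsPsiBlock p := fun p hp => hparts p (List.mem_cons_of_mem x hp)
    have hhead := head?_flatten_append_ne_true hparts' hz
    rw [List.flatten_cons, List.append_assoc] at hchain ⊢
    have hrest : NoAdjacentOnes (parts.flatten ++ z) :=
      hchain.suffix ((List.suffix_append x _).trans (List.suffix_cons true _))
    have hchain' : NoAdjacentOnes (true :: (parts.flatten ++ z)) := by
      refine List.isChain_cons.mpr ⟨fun b hb => ?_, hrest⟩
      rintro ⟨-, rfl⟩
      exact hhead hb
    rw [ziminType_eq_ziminType_shortBord_add_one (fibPrefix_ne_nil (by simp [(Phi_pos _).ne'])),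
      shortBord_fibPrefix_fibVal_psiBlock (hparts x List.mem_cons_self) hrest hhead,
      ih hparts' hchain', List.length_cons]

end Representation

theorem ziminType_fibPrefix_eq_psi_general (n : ℕ) (w : List Bool)
    (hw : IsFibRep n w) (k : ℕ) (hk : 1 ≤ k)
    (parts : List (List Bool)) (hlen : parts.length = k - 1)
    (hparts : ∀ p ∈ parts,
      p = [false, false] ∨ p = [false, false, true] ∨ p = [false, true])
    (z : List Bool) (hz : z = [] ∨ z = [false])
    (hfact : w = true :: (parts.flatten ++ z)) :
    ziminType (fibPrefix n) = k := by
  obtain ⟨-, hchain, rfl⟩ := hw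
  subst hfact
  rw [ziminType_fibPrefix_fibVal hparts hz hchain]
  omega

/-- Theorem 3: `ZFib[n] = ψ(n)`. If the Fibonacci representation `w` of `n ≥ 1`
factors as `w = 1 · x_1 ⋯ x_{k-1} · z` with each `x_i ∈ {00, 001, 01}` and `z`
empty or `0`, then the Zimin type of `F_∞[1..n]` equals `k`. -/
theorem ziminType_fibPrefix_eq_psi (n : ℕ) (hn : 1 ≤ n) (w : List Bool)
    (hw : IsFibRep n w) (k : ℕ) (hk : 1 ≤ k)
    (parts : List (List Bool)) (hlen : parts.length = k - 1)
    (hparts : ∀ p ∈ parts,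
      p = [false, false] ∨ p = [false, false, true] ∨ p = [false, true])
    (z : List Bool) (hz : z = [] ∨ z = [false])
    (hfact : w = true :: (parts.flatten ++ z)) :
    ziminType (fibPrefix n) = k :=
  ziminType_fibPrefix_eq_psi_general n w hw k hk parts hlen hparts z hz hfact
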